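/- Let G = (V,E) be a graph with n vertices and m edges and r ≤ n an integer with binom(r,2) ≤ m. Construct the SMTI instance I with: men of type 1 corresponding to edges of G, r men of type 2, n − r men of type 3; women of type 4 corresponding to vertices of G, binom(r,2) women of type 5, and m − binom(r,2) women of type 6. Type-level preferences (strict, most preferred first): type 1 ranks 6, 5, 4; types 2 and 3 each rank only type 4; type 4 ranks 2, 1, 3; types 5 and 6 each rank only type 1. Each type-1 man e = (v_j, v_l) considers the two type-4 women v_j and v_l exceptional, placing them in a tie strictly between type 6 and type 5 in his list. Then G contains a clique of size r if and only if I admits a complete stable matching. -/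

import Mathlib

variable (V : Type) [Fintype V] [DecidableEq V] (G : SimpleGraph V) [DecidableRel G.Adj] (r : ℕ)

/-- The men of the clique-reduction instance: type-1 men are the edges of `G`,
then `r` type-2 men and `card V − r` type-3 men. -/
abbrev CliqueMen : Type :=
  {e : Sym2 V // e ∈ G.edgeFinset} ⊕ (Fin r ⊕ Fin (Fintype.card V - r))

/-- The women of the clique-reduction instance: type-4 women are the vertices of
`G`, then `binom(r,2)` type-5 women and `m − binom(r,2)` type-6 women. -/
abbrev CliqueWom : Type :=
  V ⊕ (Fin (r.choose 2) ⊕ Fin (G.edgeFinset.card - r.choose 2))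

/-- Preference list of a man (smaller rank = more preferred, `none` = unacceptable).
A type-1 man `e` ranks: type 6 (rank 0), then his two exceptional women — the
endpoints of `e` — (rank 1), then type 5 (rank 2), then the other type-4 women
(rank 3).  Types 2 and 3 find exactly the type-4 women acceptable, all tied. -/
def cliqueManRank : CliqueMen V G r → CliqueWom V G r → Option ℕ
  | Sum.inl e, Sum.inl v => if v ∈ (e.1 : Sym2 V) then some 1 else some 3
  | Sum.inl _, Sum.inr (Sum.inl _) => some 2
  | Sum.inl _, Sum.inr (Sum.inr _) => some 0
  | Sum.inr _, Sum.inl _ => some 0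
  | Sum.inr _, Sum.inr _ => none

/-- Preference list of a woman: type-4 women rank type 2 (rank 0), then type 1
(rank 1), then type 3 (rank 2); types 5 and 6 find exactly the type-1 men
acceptable, all tied. -/
def cliqueWomRank : CliqueWom V G r → CliqueMen V G r → Option ℕ
  | Sum.inl _, Sum.inl _ => some 1
  | Sum.inl _, Sum.inr (Sum.inl _) => some 0
  | Sum.inl _, Sum.inr (Sum.inr _) => some 2
  | Sum.inr _, Sum.inl _ => some 0
  | Sum.inr _, Sum.inr _ => none

/-- `OptLt a b`: rank `a` is strictly better than rank `b` (where `none` means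
unacceptable/unmatched and any acceptable rank beats it). -/
def OptLt (a b : Option ℕ) : Prop := ∃ x, a = some x ∧ ∀ y, b = some y → x < y

/-- A complete matching (a bijection between men and women) is stable if it only
matches mutually acceptable pairs and admits no blocking pair. -/
def CliqueStableCSM (M : CliqueMen V G r ≃ CliqueWom V G r) : Prop :=
  (∀ a, (cliqueManRank V G r a (M a)).isSome = true ∧
        (cliqueWomRank V G r (M a) a).isSome = true) ∧
  ¬ ∃ a w, M a ≠ w ∧ OptLt (cliqueManRank V G r a w) (cliqueManRank V G r a (M a)) ∧
      OptLt (cliqueWomRank V G r w a) (cliqueWomRank V G r w (M.symm w))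

/-! In a complete stable matching, acceptability sends the `n` men of types 2 and 3 onto the
`n` type-4 women, so the edge-men are matched to women of types 5 and 6: the matching is
`cliqueMatching g f` for bijections `g` (edges to types 5/6) and `f` (types 2/3 to vertices).
Such a matching is stable exactly when both endpoints of every edge held by a type-5 woman are
matched to type-2 men, since otherwise the edge and an endpoint held by a type-3 man block it.
So the `r` vertices of the type-2 men span the `binom(r,2)` distinct edges held by type-5 women,
hence form a clique; conversely, an `r`-clique yields such a matching. -/

open Finset

theorem Equiv.exists_eq_sumCongr_trans_sumComm {α β γ δ : Type*} [Finite γ]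
    (e : α ⊕ β ≃ γ ⊕ δ) (he : ∀ b, (e (.inr b)).isLeft) (hcard : Nat.card γ ≤ Nat.card β) :
    ∃ (g : α ≃ δ) (f : β ≃ γ), e = (g.sumCongr f).trans (Equiv.sumComm δ γ) := by
  choose f hf using fun b => Sum.isLeft_iff.mp (he b)
  have hf_inj : Function.Injective f := fun b b' h =>
    Sum.inr_injective (e.injective (by rw [hf, hf, h]))
  have hf_bij := hf_inj.bijective_of_nat_card_le hcard
  have hg : ∀ a, ∃ d, e (.inl a) = .inr d := by
    intro a
    rcases ha : e (.inl a) with c | d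
    · obtain ⟨b, rfl⟩ := hf_bij.2 c
      exact absurd (e.injective (ha.trans (hf b).symm)) Sum.inl_ne_inr
    · exact ⟨d, rfl⟩
  choose g hg using hg
  have hg_bij : Function.Bijective g := by
    refine ⟨fun a a' h => Sum.inl_injective (e.injective (by rw [hg, hg, h])), fun d => ?_⟩
    rcases hd : e.symm (.inr d) with a | b
    · exact ⟨a, Sum.inr_injective (by rw [← hg, ← hd, e.apply_symm_apply])⟩
    · exact absurd (by rw [← hf, ← hd, e.apply_symm_apply]) Sum.inr_ne_inl
  refine ⟨.ofBijective g hg_bij, .ofBijective f hf_bij, Equiv.ext ?_⟩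
  rintro (a | b)
  · exact hg a
  · exact hf b

theorem exists_equiv_finSumFin_isLeft_iff {α : Type*} [Fintype α] (p : α → Prop)
    [DecidablePred p] {k n : ℕ} (hk : Fintype.card {a // p a} = k) (hn : Fintype.card α = n) :
    ∃ e : α ≃ Fin k ⊕ Fin (n - k), ∀ a, (e a).isLeft ↔ p a := by
  have hk' : Fintype.card {a // ¬ p a} = n - k := by
    rw [Fintype.card_subtype_compl, hk, hn]
  refine ⟨(Equiv.sumCompl p).symm.trans
    ((Fintype.equivFinOfCardEq hk).sumCongr (Fintype.equivFinOfCardEq hk')), fun a => ?_⟩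
  by_cases ha : p a <;>
    simp [Equiv.sumCompl_symm_apply_of_pos, Equiv.sumCompl_symm_apply_of_neg, ha]

namespace SimpleGraph

variable {V : Type*} [Fintype V] [DecidableEq V] {G : SimpleGraph V} [DecidableRel G.Adj]
  {s : Finset V}

theorem filter_mem_sym2_edgeFinset_subset :
    {e ∈ G.edgeFinset | e ∈ s.sym2} ⊆ s.offDiag.image Sym2.mk.uncurry := by
  intro e he
  induction e using Sym2.ind with
  | _ a b =>
    simp only [mem_filter, mem_edgeFinset, mem_edgeSet, mk_mem_sym2_iff] at he
    exact mem_image.2 ⟨(a, b), mem_offDiag.2 ⟨he.2.1, he.2.2, he.1.ne⟩, rfl⟩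

theorem isClique_iff_offDiag_image_subset :
    G.IsClique s ↔ s.offDiag.image Sym2.mk.uncurry ⊆ G.edgeFinset := by
  refine ⟨fun h e he => ?_, fun h a ha b hb hab => ?_⟩
  · obtain ⟨⟨a, b⟩, hab, rfl⟩ := mem_image.1 he
    obtain ⟨ha, hb, hne⟩ := mem_offDiag.1 hab
    exact mem_edgeFinset.2 (h ha hb hne)
  · have hab : (a, b) ∈ s.offDiag := mem_offDiag.2 ⟨ha, hb, hab⟩
    exact mem_edgeFinset.1 (h (mem_image_of_mem _ hab))

theorem card_filter_mem_sym2_edgeFinset_le :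
    #{e ∈ G.edgeFinset | e ∈ s.sym2} ≤ (#s).choose 2 :=
  Sym2.card_image_offDiag s ▸ card_le_card filter_mem_sym2_edgeFinset_subset

theorem isClique_iff_choose_two_le_card :
    G.IsClique s ↔ (#s).choose 2 ≤ #{e ∈ G.edgeFinset | e ∈ s.sym2} := by
  rw [isClique_iff_offDiag_image_subset, ← Sym2.card_image_offDiag]
  constructor
  · intro h
    refine card_le_card fun e he => mem_filter.2 ⟨h he, ?_⟩
    obtain ⟨⟨a, b⟩, hab, rfl⟩ := mem_image.1 he
    obtain ⟨ha, hb, -⟩ := mem_offDiag.1 hab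
    exact mk_mem_sym2_iff.2 ⟨ha, hb⟩
  · intro h
    rw [← eq_of_subset_of_card_le filter_mem_sym2_edgeFinset_subset h]
    exact filter_subset _ _

end SimpleGraph

theorem optLt_some_some {a b : ℕ} : OptLt (some a) (some b) ↔ a < b := by
  simp [OptLt]

theorem not_optLt_some_zero (a : Option ℕ) : ¬ OptLt a (some 0) := by
  rintro ⟨x, -, hx⟩
  exact Nat.not_lt_zero x (hx 0 rfl)

section CliqueMatching

variable {V : Type} [Fintype V] {G : SimpleGraph V} [DecidableRel G.Adj] {r : ℕ}

def cliqueMatching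
    (g : {e : Sym2 V // e ∈ G.edgeFinset} ≃ Fin (r.choose 2) ⊕ Fin (#G.edgeFinset - r.choose 2))
    (f : Fin r ⊕ Fin (Fintype.card V - r) ≃ V) : CliqueMen V G r ≃ CliqueWom V G r :=
  (g.sumCongr f).trans (Equiv.sumComm _ _)

variable
  (g : {e : Sym2 V // e ∈ G.edgeFinset} ≃ Fin (r.choose 2) ⊕ Fin (#G.edgeFinset - r.choose 2))
  (f : Fin r ⊕ Fin (Fintype.card V - r) ≃ V)

@[simp] theorem cliqueMatching_inl (e) : cliqueMatching g f (.inl e) = .inr (g e) := rfl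
@[simp] theorem cliqueMatching_inr (x) : cliqueMatching g f (.inr x) = .inl (f x) := rfl
@[simp] theorem cliqueMatching_symm_inl (v) :
    (cliqueMatching g f).symm (.inl v) = .inr (f.symm v) := rfl
@[simp] theorem cliqueMatching_symm_inr (c) :
    (cliqueMatching g f).symm (.inr c) = .inl (g.symm c) := rfl

variable [DecidableEq V]

theorem cliqueStableCSM_cliqueMatching_iff :
    CliqueStableCSM V G r (cliqueMatching g f) ↔
      ∀ e w, g e = .inl w → ∀ v ∈ e.1, (f.symm v).isLeft := by
  constructor
  · rintro ⟨-, hstable⟩ e w he v hv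
    by_contra hfv
    obtain ⟨z, hz⟩ := Sum.isRight_iff.mp (Sum.not_isLeft.mp hfv)
    refine hstable ⟨.inl e, .inl v, by simp, ?_, ?_⟩
    · simp [cliqueManRank, hv, he, optLt_some_some]
    · simp [cliqueWomRank, hz, optLt_some_some]
  · intro h
    refine ⟨?_, ?_⟩
    · rintro (e | x | x)
      · rcases he : g e with w | w <;> simp [he, cliqueManRank, cliqueWomRank]
      all_goals simp [cliqueManRank, cliqueWomRank]
    · rintro ⟨e | x, w, -, hman, hwom⟩
      · rcases w with v | c
        · rcases he : g e with w | w
          · by_cases hv : v ∈ e.1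
            · obtain ⟨y, hy⟩ := Sum.isLeft_iff.mp (h e w he v hv)
              simp [hy, cliqueWomRank, not_optLt_some_zero] at hwom
            · simp [he, hv, cliqueManRank, optLt_some_some] at hman
          · simp [he, cliqueManRank, not_optLt_some_zero] at hman
        · simp [cliqueWomRank, not_optLt_some_zero] at hwom
      · simp [cliqueManRank, not_optLt_some_zero] at hman

theorem CliqueStableCSM.exists_eq_cliqueMatching {M : CliqueMen V G r ≃ CliqueWom V G r}
    (hM : CliqueStableCSM V G r M) : ∃ g f, M = cliqueMatching g f := by
  have hleft : ∀ x, (M (.inr x)).isLeft := by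
    intro x
    have hacc := (hM.1 (.inr x)).1
    rcases hx : M (.inr x) with v | c
    · rfl
    · simp [hx, cliqueManRank] at hacc
  have hcard : Nat.card V ≤ Nat.card (Fin r ⊕ Fin (Fintype.card V - r)) := by
    simp only [Nat.card_eq_fintype_card, Fintype.card_sum, Fintype.card_fin]
    omega
  exact M.exists_eq_sumCongr_trans_sumComm hleft hcard

theorem exists_cliqueStableCSM_cliqueMatching {S : Finset V} (hS : G.IsNClique r S) :
    ∃ g f, CliqueStableCSM V G r (cliqueMatching g f) := by
  have hedges : Fintype.card {e : G.edgeFinset // e.1 ∈ S.sym2} = r.choose 2 :=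
    calc Fintype.card {e : G.edgeFinset // e.1 ∈ S.sym2}
        = #{e ∈ G.edgeFinset | e ∈ S.sym2} := by
          rw [Fintype.card_subtype, univ_eq_attach]
          convert congrArg card (filter_attach (· ∈ S.sym2) G.edgeFinset) using 2
          simp only [card_map, card_attach]
      _ = (#S).choose 2 := le_antisymm SimpleGraph.card_filter_mem_sym2_edgeFinset_le
          (SimpleGraph.isClique_iff_choose_two_le_card.1 hS.isClique)
      _ = r.choose 2 := by rw [hS.card_eq]
  obtain ⟨g, hg⟩ := exists_equiv_finSumFin_isLeft_iff _ hedges (Fintype.card_coe G.edgeFinset)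
  obtain ⟨f, hf⟩ := exists_equiv_finSumFin_isLeft_iff (· ∈ S) (k := r) (by simp [hS.card_eq]) rfl
  refine ⟨g, f.symm, (cliqueStableCSM_cliqueMatching_iff g f.symm).2 fun e w he v hv => ?_⟩
  rw [Equiv.symm_symm, hf]
  exact mem_sym2_iff.1 ((hg e).1 (by simp [he])) v hv

variable {g f} in
theorem isNClique_of_cliqueStableCSM_cliqueMatching
    (h : CliqueStableCSM V G r (cliqueMatching g f)) :
    G.IsNClique r (univ.map (Function.Embedding.inl.trans f.toEmbedding)) := by
  set S := univ.map (Function.Embedding.inl.trans f.toEmbedding)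
  have hS : #S = r := by simp [S]
  have hsym2 : ∀ w, (g.symm (.inl w)).1 ∈ S.sym2 := by
    refine fun w => mem_sym2_iff.2 fun v hv => ?_
    obtain ⟨y, hy⟩ := Sum.isLeft_iff.mp
      ((cliqueStableCSM_cliqueMatching_iff g f).1 h _ w (g.apply_symm_apply _) v hv)
    exact mem_map.2 ⟨y, mem_univ _, by simp [← hy]⟩
  refine ⟨SimpleGraph.isClique_iff_choose_two_le_card.2 ?_, hS⟩
  calc (#S).choose 2 = #(univ : Finset (Fin (r.choose 2))) := by simp [hS]
    _ ≤ _ := card_le_card_of_injOn (fun w => (g.symm (.inl w)).1)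
      (fun w _ => mem_filter.2 ⟨(g.symm _).2, hsym2 w⟩)
      (fun w _ w' _ hww => Sum.inl_injective (g.symm.injective (Subtype.ext hww)))

end CliqueMatching

theorem clique_iff_complete_stable_matching :
    (∃ s : Finset V, G.IsNClique r s) ↔
    ∃ M : CliqueMen V G r ≃ CliqueWom V G r, CliqueStableCSM V G r M := by
  constructor
  · rintro ⟨S, hS⟩
    obtain ⟨g, f, h⟩ := exists_cliqueStableCSM_cliqueMatching hS
    exact ⟨_, h⟩
  · rintro ⟨M, hM⟩
    obtain ⟨g, f, rfl⟩ := hM.exists_eq_cliqueMatching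
    exact ⟨_, isNClique_of_cliqueStableCSM_cliqueMatching hM⟩
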